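/- For every f ∈ C^r_+(S¹), the quantity n(f,t) is sub-multiplicative in t: n(f, t+s) ≤ n(f,t)·n(f,s) for all t, s ≥ 0. -/

import Mathlib

noncomputable section
open MeasureTheory Filter Finset Function Set Real Topology

namespace AngleMult

/-! ### Basic setting: angle-multiplying maps and suspension semi-flows -/

/-- `f ∈ C^r_+(S¹)`: positive `C^r` functions on the circle `ℝ/ℤ`,
represented as `1`-periodic functions on `ℝ`. -/
def CrPlus (r : ℕ) (f : ℝ → ℝ) : Prop :=
  ContDiff ℝ r f ∧ Function.Periodic f 1 ∧ ∀ x, 0 < f x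

/-- Birkhoff sum `f^{(n)}(x) = ∑_{i<n} f(τ^i x)` for `τ x = ℓ x` on `ℝ/ℤ`. -/
def birk (ℓ : ℕ) (f : ℝ → ℝ) (n : ℕ) (x : ℝ) : ℝ :=
  ∑ i ∈ Finset.range n, f ((ℓ : ℝ) ^ i * x)

/-- `n(x,t;f) = max{n ≥ 0 ∣ f^{(n)}(x) ≤ t}`. -/
def nstep (ℓ : ℕ) (f : ℝ → ℝ) (x t : ℝ) : ℕ :=
  sSup {n : ℕ | birk ℓ f n x ≤ t}

/-- The suspension space `X_f`, realized in the fundamental domain `[0,1) × ℝ`. -/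
def Xf (f : ℝ → ℝ) : Set (ℝ × ℝ) :=
  {p | p.1 ∈ Set.Ico (0 : ℝ) 1 ∧ p.2 ∈ Set.Ico (0 : ℝ) (f p.1)}

/-- The suspension semi-flow `T^t_f` of the angle-multiplying map `τ x = ℓx`. -/
def flow (ℓ : ℕ) (f : ℝ → ℝ) (t : ℝ) (z : ℝ × ℝ) : ℝ × ℝ :=
  (Int.fract ((ℓ : ℝ) ^ (nstep ℓ f z.1 (z.2 + t)) * z.1),
    z.2 + t - birk ℓ f (nstep ℓ f z.1 (z.2 + t)) z.1)

/-- Expansion `E(z,t;f) = ℓ^{n(x,s+t;f)}` along the orbit of `z = (x,s)` up to time `t`. -/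
def Ex (ℓ : ℕ) (f : ℝ → ℝ) (z : ℝ × ℝ) (t : ℝ) : ℝ :=
  (ℓ : ℝ) ^ (nstep ℓ f z.1 (z.2 + t))

/-- The preimage `(T^t_f)^{-1}(z)` inside `X_f`. -/
def preim (ℓ : ℕ) (f : ℝ → ℝ) (t : ℝ) (z : ℝ × ℝ) : Set (ℝ × ℝ) :=
  {w | w ∈ Xf f ∧ flow ℓ f t w = z}

/-- Minimum expansion rate `λ_min(T_f) = lim_{t→∞}(min_z E(z,t;f))^{1/t}`. -/
def lamMin (ℓ : ℕ) (f : ℝ → ℝ) : ℝ :=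
  limUnder atTop fun t : ℝ => (sInf {e : ℝ | ∃ z ∈ Xf f, e = Ex ℓ f z t}) ^ (1 / t)

/-- `θ_f = max_x |f'(x)| / (γ₀ ℓ - 1)`. -/
def thetaF (ℓ : ℕ) (γ₀ : ℝ) (f : ℝ → ℝ) : ℝ :=
  sSup {y : ℝ | ∃ x, y = |deriv f x|} / (γ₀ * ℓ - 1)

/-- The cone `C(θ) = {(x,y) ∣ |y| ≤ θ|x|}`. -/
def cone (θ : ℝ) : Set (ℝ × ℝ) := {v | |v.2| ≤ θ * |v.1|}

/-- The differential `(DT^t_f)_ζ` (with the boundary convention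
`(DT^t_f)_z = lim_{ε→0+}(DT^t_f)_{z+(0,ε)}` built in), applied to a tangent vector. -/
def DTapp (ℓ : ℕ) (f : ℝ → ℝ) (t : ℝ) (ζ : ℝ × ℝ) (v : ℝ × ℝ) : ℝ × ℝ :=
  ((ℓ : ℝ) ^ (nstep ℓ f ζ.1 (ζ.2 + t)) * v.1,
    v.2 - deriv (fun x => birk ℓ f (nstep ℓ f ζ.1 (ζ.2 + t)) x) ζ.1 * v.1)

/-- `det (DT^t_f)_ζ`. -/
def detDT (ℓ : ℕ) (f : ℝ → ℝ) (t : ℝ) (ζ : ℝ × ℝ) : ℝ :=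
  (DTapp ℓ f t ζ (1, 0)).1 * (DTapp ℓ f t ζ (0, 1)).2 -
    (DTapp ℓ f t ζ (1, 0)).2 * (DTapp ℓ f t ζ (0, 1)).1

/-- The image cone `(DT^t_f)_ζ(C_f)`. -/
def coneIm (ℓ : ℕ) (γ₀ : ℝ) (f : ℝ → ℝ) (t : ℝ) (ζ : ℝ × ℝ) : Set (ℝ × ℝ) :=
  DTapp ℓ f t ζ '' cone (thetaF ℓ γ₀ f)

/-- `(DT^t_f)_ζ(C_f) ∩ (DT^t_f)_w(C_f) ≠ {0}`. -/
def conesMeet (ℓ : ℕ) (γ₀ : ℝ) (f : ℝ → ℝ) (t : ℝ) (ζ w : ℝ × ℝ) : Prop :=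
  ¬ (coneIm ℓ γ₀ f t ζ ∩ coneIm ℓ γ₀ f t w ⊆ {0})

/-- The transversality quantity `𝐦(f,t)`. -/
def mQ (ℓ : ℕ) (γ₀ : ℝ) (f : ℝ → ℝ) (t : ℝ) : ℝ :=
  sSup {x : ℝ | ∃ z ∈ Xf f, ∃ w ∈ preim ℓ f t z,
    x = ∑' ζ : {ζ : ℝ × ℝ // ζ ∈ preim ℓ f t z ∧ conesMeet ℓ γ₀ f t ζ w},
      1 / Ex ℓ f ζ.1 t}

/-- The exponent `𝐦(f) = limsup_{t→∞} 𝐦(f,t)^{1/t}`. -/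
def mExp (ℓ : ℕ) (γ₀ : ℝ) (f : ℝ → ℝ) : ℝ :=
  Filter.limsup (fun t : ℝ => (mQ ℓ γ₀ f t) ^ (1 / t)) atTop

/-- `m_f`: normalized restriction of Lebesgue measure to `X_f`. -/
def mVol (f : ℝ → ℝ) : Measure (ℝ × ℝ) :=
  (volume (Xf f))⁻¹ • volume.restrict (Xf f)

/-- The Perron-Frobenius operator `𝒫^t_f u (z) = ∑_{w ∈ (T^t_f)^{-1}z} u(w)/det(DT^t_f)_w`. -/
def PF (ℓ : ℕ) (f : ℝ → ℝ) (t : ℝ) (u : ℝ × ℝ → ℂ) (z : ℝ × ℝ) : ℂ :=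
  ∑' w : preim ℓ f t z, u w / (detDT ℓ f t w : ℂ)

/-- Weak mixing of the semi-flow `T_f`: there is no nonzero `L²` eigenfunction
`Φ ∘ T^t_f = e^{iat} Φ` with `a ≠ 0`. -/
def WeakMixing (ℓ : ℕ) (f : ℝ → ℝ) : Prop :=
  ¬ ∃ (a : ℝ) (Φ : ℝ × ℝ → ℂ), a ≠ 0 ∧ MemLp Φ 2 (mVol f) ∧ ¬ (Φ =ᵐ[mVol f] 0) ∧
    ∀ t : ℝ, 0 ≤ t →
      (fun z => Φ (flow ℓ f t z)) =ᵐ[mVol f]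
        (fun z => Complex.exp (Complex.I * a * t) * Φ z)

/-- `C¹(X_f)`: functions on `X_f` whose Perron-Frobenius images are all `C¹`
on the interior of `X_f`. -/
def C1X (ℓ : ℕ) (f : ℝ → ℝ) : Set (ℝ × ℝ → ℂ) :=
  {φ | (∀ z, z ∉ Xf f → φ z = 0) ∧
    ∀ t : ℝ, 0 ≤ t → ContDiffOn ℝ 1 (PF ℓ f t φ) (interior (Xf f))}

/-- Correlation `Cor_t(ψ,φ)`. -/
def Cor (ℓ : ℕ) (f : ℝ → ℝ) (t : ℝ) (ψ φ : ℝ × ℝ → ℂ) : ℂ :=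
  (∫ z, ψ z * φ (flow ℓ f t z) ∂(mVol f)) -
    (∫ z, φ z ∂(mVol f)) * (∫ z, ψ z ∂(mVol f))

/-- The `C^r` distance on functions on the circle. -/
def dCr (r : ℕ) (f g : ℝ → ℝ) : ℝ :=
  ∑ i ∈ Finset.range (r + 1),
    sSup {y : ℝ | ∃ x, y = |iteratedDeriv i f x - iteratedDeriv i g x|}

/-- `U` is open in `C^r_+(S¹)` for the `C^r` topology. -/
def CrOpenIn (r : ℕ) (U : Set (ℝ → ℝ)) : Prop :=
  ∀ f ∈ U, ∃ ε > 0, ∀ g, CrPlus r g → dCr r f g < ε → g ∈ U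

/-- `U` is dense in `C^r_+(S¹)` for the `C^r` topology. -/
def CrDenseIn (r : ℕ) (U : Set (ℝ → ℝ)) : Prop :=
  ∀ f, CrPlus r f → ∀ ε > 0, ∃ g ∈ U, CrPlus r g ∧ dCr r f g < ε

/-- The essential spectral radius of a bounded operator:
`lim_{n→∞} (inf{‖Lⁿ - K‖ : K compact})^{1/n}`. -/
def essRad {E : Type*} [NormedAddCommGroup E] [NormedSpace ℂ E] (T : E →L[ℂ] E) : ℝ :=
  limUnder atTop fun n : ℕ =>
    (sInf {c : ℝ | ∃ K : E →L[ℂ] E, IsCompactOperator K ∧ c = ‖T ^ n - K‖}) ^ (1 / (n : ℝ))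

/-- The wider cone `Ĉ_f = C(2θ_f)`. -/
def hatCone (ℓ : ℕ) (γ₀ : ℝ) (f : ℝ → ℝ) : Set (ℝ × ℝ) :=
  cone (2 * thetaF ℓ γ₀ f)

/-- `𝐧(f,t,z,L)` for the line `L = ℝ·v`: the sum of `1/E(ζ,t;f)` over those preimages
`ζ ∈ (T^t_f)^{-1}(z)` with `L ⊂ (DT^t_f)_ζ(Ĉ_f)`. -/
def nQat (ℓ : ℕ) (γ₀ : ℝ) (f : ℝ → ℝ) (t : ℝ) (z v : ℝ × ℝ) : ℝ :=
  ∑' ζ : {ζ : ℝ × ℝ // ζ ∈ preim ℓ f t z ∧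
      ∀ c : ℝ, c • v ∈ DTapp ℓ f t ζ '' hatCone ℓ γ₀ f},
    1 / Ex ℓ f ζ.1 t

/-- `𝐧(f,t) = max_{z ∈ X_f} max_{L ∈ ℝP¹} 𝐧(f,t,z,L)`. -/
def nQ (ℓ : ℕ) (γ₀ : ℝ) (f : ℝ → ℝ) (t : ℝ) : ℝ :=
  sSup {x : ℝ | ∃ z ∈ Xf f, ∃ v : ℝ × ℝ, v ≠ 0 ∧ x = nQat ℓ γ₀ f t z v}

/-- `𝐧(f) = lim_{t→∞} 𝐧(f,t)^{1/t}`. -/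
def nExp (ℓ : ℕ) (γ₀ : ℝ) (f : ℝ → ℝ) : ℝ :=
  Filter.limsup (fun t : ℝ => (nQ ℓ γ₀ f t) ^ (1 / t)) atTop


section Aux

variable {ℓ : ℕ} {f : ℝ → ℝ}

lemma per_int (hper : Function.Periodic f 1) (x : ℝ) (k : ℤ) : f (x - k) = f x := by
  simpa using hper.sub_int_mul_eq (x := x) k

lemma per_fract (hper : Function.Periodic f 1) (x : ℝ) : f (Int.fract x) = f x := by
  rw [Int.fract]; exact per_int hper x ⌊x⌋

lemma pow_mul_fract (hℓ : 2 ≤ ℓ) (k : ℕ) (y : ℝ) :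
    (ℓ : ℝ) ^ k * Int.fract y = (ℓ : ℝ) ^ k * y - ((ℓ ^ k * ⌊y⌋ : ℤ) : ℝ) := by
  rw [Int.fract]; push_cast; ring

lemma birk_fract (hℓ : 2 ≤ ℓ) (hper : Function.Periodic f 1) (n : ℕ) (y : ℝ) :
    birk ℓ f n (Int.fract y) = birk ℓ f n y := by
  unfold birk
  refine Finset.sum_congr rfl fun i _ => ?_
  rw [pow_mul_fract hℓ, per_int hper]

lemma fract_pow_mul_fract (hℓ : 2 ≤ ℓ) (k : ℕ) (y : ℝ) :
    Int.fract ((ℓ : ℝ) ^ k * Int.fract y) = Int.fract ((ℓ : ℝ) ^ k * y) := by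
  rw [pow_mul_fract hℓ, Int.fract_sub_intCast]

lemma birk_add (n m : ℕ) (x : ℝ) :
    birk ℓ f (n + m) x = birk ℓ f n x + birk ℓ f m ((ℓ : ℝ) ^ n * x) := by
  unfold birk
  rw [Finset.sum_range_add]
  congr 1
  refine Finset.sum_congr rfl fun i _ => ?_
  rw [← mul_assoc, ← pow_add, Nat.add_comm n i]

lemma birk_mono (hpos : ∀ x, 0 < f x) (x : ℝ) : StrictMono fun n => birk ℓ f n x := by
  apply strictMono_nat_of_lt_succ
  intro n
  have : birk ℓ f (n + 1) x = birk ℓ f n x + f ((ℓ : ℝ) ^ n * x) := by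
    unfold birk; rw [Finset.sum_range_succ]
  rw [this]; linarith [hpos ((ℓ : ℝ) ^ n * x)]

lemma birk_ge (m : ℝ) (hm : ∀ x, m ≤ f x) (n : ℕ) (x : ℝ) :
    n * m ≤ birk ℓ f n x := by
  calc (n : ℝ) * m = ∑ _i ∈ Finset.range n, m := by
        rw [Finset.sum_const, Finset.card_range, nsmul_eq_mul]
    _ ≤ birk ℓ f n x := Finset.sum_le_sum fun i _ => hm _

lemma nstep_spec (hpos : ∀ x, 0 < f x) (m : ℝ) (hm0 : 0 < m) (hm : ∀ x, m ≤ f x)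
    {x T : ℝ} (hT : 0 ≤ T) :
    birk ℓ f (nstep ℓ f x T) x ≤ T ∧ T < birk ℓ f (nstep ℓ f x T + 1) x := by
  have hne : {n : ℕ | birk ℓ f n x ≤ T}.Nonempty := ⟨0, by simp [birk, hT]⟩
  have hbdd : BddAbove {n : ℕ | birk ℓ f n x ≤ T} := by
    refine ⟨⌈T / m⌉₊, fun n hn => ?_⟩
    have h1 : (n : ℝ) * m ≤ T := le_trans (birk_ge m hm n x) hn
    have h2 : (n : ℝ) ≤ T / m := (le_div_iff₀ hm0).2 h1
    have h3 : (n : ℝ) ≤ (⌈T / m⌉₊ : ℝ) := h2.trans (Nat.le_ceil _)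
    exact_mod_cast h3
  constructor
  · exact Nat.sSup_mem hne hbdd
  · by_contra h
    push_neg at h
    have : nstep ℓ f x T + 1 ∈ {n : ℕ | birk ℓ f n x ≤ T} := h
    have h4 := le_csSup hbdd this
    simp only [nstep] at h4
    omega

lemma nstep_eq (hpos : ∀ x, 0 < f x) {x T : ℝ} {n : ℕ}
    (h1 : birk ℓ f n x ≤ T) (h2 : T < birk ℓ f (n + 1) x) :
    nstep ℓ f x T = n := by
  have hsub : {k : ℕ | birk ℓ f k x ≤ T} ⊆ Set.Iic n := by
    intro k hk
    by_contra hkn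
    simp only [Set.mem_Iic, not_le] at hkn
    have : birk ℓ f (n + 1) x ≤ birk ℓ f k x := (birk_mono hpos x).monotone hkn
    have : birk ℓ f (n+1) x ≤ T := le_trans this hk
    linarith
  have hbdd : BddAbove {k : ℕ | birk ℓ f k x ≤ T} := ⟨n, fun k hk => hsub hk⟩
  exact le_antisymm (csSup_le ⟨n, h1⟩ fun k hk => hsub hk) (le_csSup hbdd h1)


/-- positive lower bound for `f` -/
lemma exists_min (hcont : Continuous f) (hper : Function.Periodic f 1)
    (hpos : ∀ x, 0 < f x) : ∃ m : ℝ, 0 < m ∧ ∀ x, m ≤ f x := by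
  obtain ⟨x₀, _, hx₀⟩ := (isCompact_Icc (a := (0:ℝ)) (b := 1)).exists_isMinOn
    (Set.nonempty_Icc.2 zero_le_one) hcont.continuousOn
  rw [isMinOn_iff] at hx₀
  refine ⟨f x₀, hpos x₀, fun x => ?_⟩
  have : f (Int.fract x) = f x := per_fract hper x
  rw [← this]
  exact hx₀ _ ⟨Int.fract_nonneg x, (Int.fract_lt_one x).le⟩

/-- upper bound for `f` -/
lemma exists_max (hcont : Continuous f) (hper : Function.Periodic f 1) :
    ∃ F : ℝ, ∀ x, f x ≤ F := by
  obtain ⟨x₁, _, hx₁⟩ := (isCompact_Icc (a := (0:ℝ)) (b := 1)).exists_isMaxOn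
    (Set.nonempty_Icc.2 zero_le_one) hcont.continuousOn
  rw [isMaxOn_iff] at hx₁
  refine ⟨f x₁, fun x => ?_⟩
  rw [← per_fract hper x]
  exact hx₁ _ ⟨Int.fract_nonneg x, (Int.fract_lt_one x).le⟩

section Flow

variable (hℓ : 2 ≤ ℓ) (hcont : Continuous f) (hper : Function.Periodic f 1)
  (hpos : ∀ x, 0 < f x)

include hℓ hcont hper hpos

lemma flow_mem_Xf {ζ : ℝ × ℝ} (hζ : ζ ∈ Xf f) {t : ℝ} (ht : 0 ≤ t) :
    flow ℓ f t ζ ∈ Xf f := by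
  obtain ⟨m, hm0, hm⟩ := exists_min hcont hper hpos
  have hT : 0 ≤ ζ.2 + t := add_nonneg hζ.2.1 ht
  obtain ⟨h1, h2⟩ := nstep_spec hpos m hm0 hm hT (x := ζ.1)
  set n := nstep ℓ f ζ.1 (ζ.2 + t)
  refine ⟨⟨Int.fract_nonneg _, Int.fract_lt_one _⟩, ⟨show (0:ℝ) ≤ ζ.2 + t - birk ℓ f n ζ.1 from sub_nonneg.2 h1, ?_⟩⟩
  have hb : birk ℓ f (n + 1) ζ.1 = birk ℓ f n ζ.1 + f ((ℓ:ℝ) ^ n * ζ.1) := by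
    rw [birk_add]; simp [birk]
  have : f (Int.fract ((ℓ:ℝ) ^ n * ζ.1)) = f ((ℓ:ℝ) ^ n * ζ.1) := per_fract hper _
  simp only [flow]
  rw [this]
  rw [hb] at h2
  linarith

lemma nstep_flow_add {ζ : ℝ × ℝ} (hζ2 : 0 ≤ ζ.2) {t s : ℝ} (ht : 0 ≤ t) (hs : 0 ≤ s) :
    nstep ℓ f ζ.1 (ζ.2 + (t + s)) =
      nstep ℓ f ζ.1 (ζ.2 + t) + nstep ℓ f (flow ℓ f t ζ).1 ((flow ℓ f t ζ).2 + s) := by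
  obtain ⟨m, hm0, hm⟩ := exists_min hcont hper hpos
  set n₁ := nstep ℓ f ζ.1 (ζ.2 + t) with hn₁
  set w := flow ℓ f t ζ with hw
  set n₂ := nstep ℓ f w.1 (w.2 + s) with hn₂
  obtain ⟨h1, h2⟩ := nstep_spec hpos m hm0 hm (add_nonneg hζ2 ht) (x := ζ.1)
  have hw2 : 0 ≤ w.2 := show (0:ℝ) ≤ ζ.2 + t - birk ℓ f n₁ ζ.1 from sub_nonneg.2 h1
  obtain ⟨h3, h4⟩ := nstep_spec hpos m hm0 hm (add_nonneg hw2 hs) (x := w.1)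
  have hb1 : ∀ k, birk ℓ f k w.1 = birk ℓ f k ((ℓ:ℝ) ^ n₁ * ζ.1) := fun k =>
    birk_fract hℓ hper k _
  have hw2e : w.2 = ζ.2 + t - birk ℓ f n₁ ζ.1 := rfl
  refine nstep_eq hpos ?_ ?_
  · rw [birk_add]
    rw [hb1] at h3
    linarith
  · have : n₁ + n₂ + 1 = n₁ + (n₂ + 1) := by ring
    rw [this, birk_add]
    rw [hb1] at h4
    linarith

lemma flow_comp {ζ : ℝ × ℝ} (hζ2 : 0 ≤ ζ.2) {t s : ℝ} (ht : 0 ≤ t) (hs : 0 ≤ s) :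
    flow ℓ f s (flow ℓ f t ζ) = flow ℓ f (t + s) ζ := by
  set n₁ := nstep ℓ f ζ.1 (ζ.2 + t) with hn₁
  set w := flow ℓ f t ζ with hw
  set n₂ := nstep ℓ f w.1 (w.2 + s) with hn₂
  have hN : nstep ℓ f ζ.1 (ζ.2 + (t + s)) = n₁ + n₂ :=
    nstep_flow_add hℓ hcont hper hpos hζ2 ht hs
  have hw1 : w.1 = Int.fract ((ℓ:ℝ) ^ n₁ * ζ.1) := rfl
  have hw2 : w.2 = ζ.2 + t - birk ℓ f n₁ ζ.1 := rfl
  have hb1 : birk ℓ f n₂ w.1 = birk ℓ f n₂ ((ℓ:ℝ) ^ n₁ * ζ.1) := birk_fract hℓ hper _ _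
  simp only [flow, ← hn₂, hN]
  refine Prod.ext ?_ ?_
  · rw [hw1, fract_pow_mul_fract hℓ, ← mul_assoc, ← pow_add, Nat.add_comm n₂ n₁]
  · rw [hw2, hb1, birk_add]
    ring

end Flow


/-- explicit derivative of the Birkhoff sum -/
def Db (ℓ : ℕ) (f : ℝ → ℝ) (n : ℕ) (x : ℝ) : ℝ :=
  ∑ i ∈ Finset.range n, deriv f ((ℓ : ℝ) ^ i * x) * (ℓ : ℝ) ^ i

lemma hasDerivAt_birk (hdiff : Differentiable ℝ f) (n : ℕ) (x : ℝ) :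
    HasDerivAt (fun y => birk ℓ f n y) (Db ℓ f n x) x := by
  unfold birk Db
  refine HasDerivAt.fun_sum fun i _ => ?_
  have h1 : HasDerivAt (fun y : ℝ => (ℓ : ℝ) ^ i * y) ((ℓ:ℝ) ^ i * 1) x :=
    (hasDerivAt_id x).const_mul _
  have h2 : HasDerivAt (fun y : ℝ => f ((ℓ:ℝ) ^ i * y))
      (deriv f ((ℓ:ℝ) ^ i * x) * ((ℓ:ℝ) ^ i * 1)) x :=
    HasDerivAt.comp x ((hdiff ((ℓ:ℝ) ^ i * x)).hasDerivAt) h1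
  simpa using h2

lemma deriv_birk (hdiff : Differentiable ℝ f) (n : ℕ) (x : ℝ) :
    deriv (fun y => birk ℓ f n y) x = Db ℓ f n x :=
  (hasDerivAt_birk hdiff n x).deriv

lemma Db_add (n m : ℕ) (x : ℝ) :
    Db ℓ f (n + m) x = Db ℓ f n x + (ℓ:ℝ) ^ n * Db ℓ f m ((ℓ:ℝ) ^ n * x) := by
  unfold Db
  rw [Finset.sum_range_add, Finset.mul_sum]
  congr 1
  refine Finset.sum_congr rfl fun i _ => ?_
  rw [← mul_assoc ((ℓ:ℝ) ^ i) _ x, ← pow_add, Nat.add_comm i n]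
  ring

lemma deriv_per (hper : Function.Periodic f 1) (x : ℝ) (k : ℤ) :
    deriv f (x - k) = deriv f x := by
  have h : (fun y : ℝ => f (y - (k:ℝ))) = f := funext fun y => per_int hper y k
  have := deriv_comp_sub_const (f := f) (a := (k:ℝ)) (x := x)
  rw [h] at this
  exact this.symm

lemma deriv_fract (hper : Function.Periodic f 1) (y : ℝ) :
    deriv f (Int.fract y) = deriv f y := by
  rw [Int.fract]
  exact deriv_per hper y ⌊y⌋

lemma Db_fract (hℓ : 2 ≤ ℓ) (hper : Function.Periodic f 1) (n : ℕ) (y : ℝ) :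
    Db ℓ f n (Int.fract y) = Db ℓ f n y := by
  unfold Db
  refine Finset.sum_congr rfl fun i _ => ?_
  rw [pow_mul_fract hℓ, deriv_per hper]

/-- `M` bound for `|f'|` -/
lemma Mbound (r : ℕ) (hr : 3 ≤ r) (hf : ContDiff ℝ r f) (hper : Function.Periodic f 1) :
    (∀ x, |deriv f x| ≤ sSup {y : ℝ | ∃ x, y = |deriv f x|}) ∧
      0 ≤ sSup {y : ℝ | ∃ x, y = |deriv f x|} := by
  have hcd : Continuous (deriv f) := by
    refine hf.continuous_deriv ?_
    exact_mod_cast le_trans (by norm_num : (1:ℕ) ≤ 3) hr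
  obtain ⟨x₁, _, hx₁⟩ := (isCompact_Icc (a := (0:ℝ)) (b := 1)).exists_isMaxOn
    (Set.nonempty_Icc.2 zero_le_one) (continuous_abs.comp hcd).continuousOn
  rw [isMaxOn_iff] at hx₁
  have key : ∀ x, |deriv f x| ≤ |deriv f x₁| := by
    intro x
    have h1 : deriv f (Int.fract x) = deriv f x := deriv_fract hper x
    have := hx₁ (Int.fract x) ⟨Int.fract_nonneg x, (Int.fract_lt_one x).le⟩
    simpa [h1] using this
  have hbdd : BddAbove {y : ℝ | ∃ x, y = |deriv f x|} := by
    refine ⟨|deriv f x₁|, ?_⟩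
    rintro y ⟨x, rfl⟩
    exact key x
  have hM : ∀ x, |deriv f x| ≤ sSup {y : ℝ | ∃ x, y = |deriv f x|} := fun x =>
    le_csSup hbdd ⟨x, rfl⟩
  exact ⟨hM, le_trans (abs_nonneg _) (hM 0)⟩

lemma Db_bound {M : ℝ} (hℓ : 2 ≤ ℓ) (hM : ∀ x, |deriv f x| ≤ M) (n : ℕ) (x : ℝ) :
    |Db ℓ f n x| ≤ M * (((ℓ:ℝ) ^ n - 1) / ((ℓ:ℝ) - 1)) := by
  have hℓ1 : (1:ℝ) < (ℓ:ℝ) := by exact_mod_cast lt_of_lt_of_le one_lt_two (by exact_mod_cast hℓ)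
  have hgeom : ∑ i ∈ Finset.range n, (ℓ:ℝ) ^ i = ((ℓ:ℝ) ^ n - 1) / ((ℓ:ℝ) - 1) :=
    geom_sum_eq (ne_of_gt hℓ1) n
  calc |Db ℓ f n x| ≤ ∑ i ∈ Finset.range n, |deriv f ((ℓ:ℝ) ^ i * x) * (ℓ:ℝ) ^ i| :=
        Finset.abs_sum_le_sum_abs _ _
    _ ≤ ∑ i ∈ Finset.range n, M * (ℓ:ℝ) ^ i := by
        refine Finset.sum_le_sum fun i _ => ?_
        rw [abs_mul, abs_pow, Nat.abs_cast]
        exact mul_le_mul_of_nonneg_right (hM _) (by positivity)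
    _ = M * (((ℓ:ℝ) ^ n - 1) / ((ℓ:ℝ) - 1)) := by rw [← Finset.mul_sum, hgeom]

section Cone

variable {r : ℕ} {γ₀ : ℝ}

/-- cone invariance -/
lemma DTapp_cone (hℓ : 2 ≤ ℓ) (hr : 3 ≤ r) (hf : ContDiff ℝ r f)
    (hper : Function.Periodic f 1) (hγ₁ : (ℓ : ℝ)⁻¹ < γ₀) (hγ₂ : γ₀ < 1)
    {t : ℝ} {ζ v : ℝ × ℝ} (hv : v ∈ hatCone ℓ γ₀ f) :
    DTapp ℓ f t ζ v ∈ hatCone ℓ γ₀ f := by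
  obtain ⟨hM, hM0⟩ := Mbound r hr hf hper
  set M := sSup {y : ℝ | ∃ x, y = |deriv f x|} with hMdef
  have hℓ1 : (1:ℝ) < (ℓ:ℝ) := by exact_mod_cast lt_of_lt_of_le one_lt_two (by exact_mod_cast hℓ)
  have hl : (0:ℝ) < (ℓ:ℝ) - 1 := by linarith
  have hγℓ : 1 < γ₀ * ℓ := by
    have h0 : (0:ℝ) < (ℓ:ℝ) := lt_trans zero_lt_one hℓ1
    have h1 := mul_lt_mul_of_pos_right hγ₁ h0
    rw [inv_mul_cancel₀ (ne_of_gt h0)] at h1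
    linarith
  have h3 : (0:ℝ) < γ₀ * ℓ - 1 := by linarith
  have hthe : thetaF ℓ γ₀ f = M / (γ₀ * ℓ - 1) := rfl
  have hθ0 : 0 ≤ M / (γ₀ * (ℓ:ℝ) - 1) := by positivity
  set n := nstep ℓ f ζ.1 (ζ.2 + t) with hn
  set E := (ℓ:ℝ) ^ n with hE
  have hE1 : 1 ≤ E := one_le_pow₀ hℓ1.le
  set D := deriv (fun x => birk ℓ f n x) ζ.1 with hD
  have hdiff : Differentiable ℝ f :=
    hf.differentiable (by exact_mod_cast (show r ≠ 0 by omega))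
  have hDb : D = Db ℓ f n ζ.1 := deriv_birk hdiff n ζ.1
  have hDbd : |D| ≤ M * ((E - 1) / ((ℓ:ℝ) - 1)) := by rw [hDb]; exact Db_bound hℓ hM n ζ.1
  have hkey : M * ((E - 1) / ((ℓ:ℝ) - 1)) ≤ 2 * (M / (γ₀ * ℓ - 1)) * (E - 1) := by
    have e1 : M * ((E - 1) / ((ℓ:ℝ) - 1)) = M * (E - 1) / ((ℓ:ℝ) - 1) := by ring
    have e2 : 2 * (M / (γ₀ * ℓ - 1)) * (E - 1) = 2 * M * (E - 1) / (γ₀ * ℓ - 1) := by ring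
    rw [e1, e2, div_le_div_iff₀ hl h3]
    have hA : 0 ≤ M * (E - 1) := mul_nonneg hM0 (by linarith)
    have h2' : γ₀ * ℓ - 1 ≤ 2 * ((ℓ:ℝ) - 1) := by nlinarith
    nlinarith [mul_le_mul_of_nonneg_left h2' hA]
  simp only [hatCone, cone, hthe, Set.mem_setOf_eq] at hv ⊢
  simp only [DTapp, ← hn, ← hD, ← hE]
  have h4 : |v.2 - D * v.1| ≤ |v.2| + |D| * |v.1| := by
    calc |v.2 - D * v.1| ≤ |v.2| + |D * v.1| := abs_sub _ _
      _ = |v.2| + |D| * |v.1| := by rw [abs_mul]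
  have h5 : |E * v.1| = E * |v.1| := by
    rw [abs_mul, abs_of_pos (lt_of_lt_of_le zero_lt_one hE1)]
  rw [h5]
  have h6 : |D| * |v.1| ≤ 2 * (M / (γ₀ * ℓ - 1)) * (E - 1) * |v.1| :=
    mul_le_mul_of_nonneg_right (le_trans hDbd hkey) (abs_nonneg _)
  calc |v.2 - D * v.1| ≤ |v.2| + |D| * |v.1| := h4
    _ ≤ 2 * (M / (γ₀ * ℓ - 1)) * |v.1| + 2 * (M / (γ₀ * ℓ - 1)) * (E - 1) * |v.1| :=
        add_le_add hv h6
    _ = 2 * (M / (γ₀ * ℓ - 1)) * (E * |v.1|) := by ring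

end Cone

section Comp

variable (hℓ : 2 ≤ ℓ) (hcont : Continuous f) (hper : Function.Periodic f 1)
  (hpos : ∀ x, 0 < f x) (hdiff : Differentiable ℝ f)

include hℓ hcont hper hpos

lemma Ex_comp {ζ : ℝ × ℝ} (hζ2 : 0 ≤ ζ.2) {t s : ℝ} (ht : 0 ≤ t) (hs : 0 ≤ s) :
    Ex ℓ f ζ (t + s) = Ex ℓ f ζ t * Ex ℓ f (flow ℓ f t ζ) s := by
  unfold Ex
  rw [show ζ.2 + (t + s) = ζ.2 + (t + s) from rfl,
    nstep_flow_add hℓ hcont hper hpos hζ2 ht hs, pow_add]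

omit hcont hper hpos in
lemma Ex_pos (t : ℝ) (ζ : ℝ × ℝ) : 0 < Ex ℓ f ζ t := by
  have : (0:ℝ) < (ℓ:ℝ) := by
    have : (2:ℝ) ≤ (ℓ:ℝ) := by exact_mod_cast hℓ
    linarith
  exact pow_pos this _

include hdiff

lemma DTapp_comp {ζ : ℝ × ℝ} (hζ2 : 0 ≤ ζ.2) {t s : ℝ} (ht : 0 ≤ t) (hs : 0 ≤ s)
    (u : ℝ × ℝ) :
    DTapp ℓ f (t + s) ζ u = DTapp ℓ f s (flow ℓ f t ζ) (DTapp ℓ f t ζ u) := by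
  set n₁ := nstep ℓ f ζ.1 (ζ.2 + t) with hn₁
  set w := flow ℓ f t ζ with hw
  set n₂ := nstep ℓ f w.1 (w.2 + s) with hn₂
  have hN : nstep ℓ f ζ.1 (ζ.2 + (t + s)) = n₁ + n₂ :=
    nstep_flow_add hℓ hcont hper hpos hζ2 ht hs
  have hw1 : w.1 = Int.fract ((ℓ:ℝ) ^ n₁ * ζ.1) := rfl
  have hDb2 : Db ℓ f n₂ w.1 = Db ℓ f n₂ ((ℓ:ℝ) ^ n₁ * ζ.1) := by
    rw [hw1]; exact Db_fract hℓ hper n₂ _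
  simp only [DTapp, ← hn₁, ← hn₂, hN, deriv_birk hdiff]
  refine Prod.ext ?_ ?_
  · simp only [pow_add]; ring
  · simp only [Db_add, hDb2]; ring

end Comp

section Lin

variable (hℓ : 2 ≤ ℓ)

lemma DTapp_smul (t : ℝ) (w : ℝ × ℝ) (c : ℝ) (u : ℝ × ℝ) :
    DTapp ℓ f t w (c • u) = c • DTapp ℓ f t w u := by
  simp only [DTapp, Prod.smul_fst, Prod.smul_snd, smul_eq_mul, Prod.smul_mk]
  refine Prod.ext ?_ ?_ <;> simp <;> ring

include hℓ

lemma DTapp_inj (t : ℝ) (w : ℝ × ℝ) : Function.Injective (DTapp ℓ f t w) := by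
  intro a b hab
  have hE : ((ℓ:ℝ) ^ (nstep ℓ f w.1 (w.2 + t))) ≠ 0 := by
    have : (0:ℝ) < (ℓ:ℝ) := by
      have : (2:ℝ) ≤ (ℓ:ℝ) := by exact_mod_cast hℓ
      linarith
    positivity
  simp only [DTapp, Prod.mk.injEq] at hab
  obtain ⟨h1, h2⟩ := hab
  have ha1 : a.1 = b.1 := by
    have := mul_left_cancel₀ hE h1
    exact this
  have ha2 : a.2 = b.2 := by
    rw [ha1] at h2
    linarith [h2]
  exact Prod.ext ha1 ha2

/-- explicit right inverse of `DTapp` -/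
def DTinv (ℓ : ℕ) (f : ℝ → ℝ) (t : ℝ) (w : ℝ × ℝ) (v : ℝ × ℝ) : ℝ × ℝ :=
  (v.1 / (ℓ:ℝ) ^ (nstep ℓ f w.1 (w.2 + t)),
    v.2 + deriv (fun x => birk ℓ f (nstep ℓ f w.1 (w.2 + t)) x) w.1 *
      (v.1 / (ℓ:ℝ) ^ (nstep ℓ f w.1 (w.2 + t))))

lemma DTapp_DTinv (t : ℝ) (w : ℝ × ℝ) (v : ℝ × ℝ) :
    DTapp ℓ f t w (DTinv ℓ f t w v) = v := by
  have hE : ((ℓ:ℝ) ^ (nstep ℓ f w.1 (w.2 + t))) ≠ 0 := by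
    have : (0:ℝ) < (ℓ:ℝ) := by
      have : (2:ℝ) ≤ (ℓ:ℝ) := by exact_mod_cast hℓ
      linarith
    positivity
  simp only [DTapp, DTinv]
  refine Prod.ext ?_ ?_
  · simp only []
    field_simp
  · simp only []
    ring

lemma DTinv_ne_zero (t : ℝ) (w : ℝ × ℝ) {v : ℝ × ℝ} (hv : v ≠ 0) :
    DTinv ℓ f t w v ≠ 0 := by
  intro h
  apply hv
  have := DTapp_DTinv (f := f) hℓ t w v
  rw [h] at this
  have h0 : DTapp ℓ f t w 0 = 0 := by
    simp [DTapp]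
  rw [h0] at this
  exact this.symm

end Lin


section Count

variable (hℓ : 2 ≤ ℓ) (hcont : Continuous f) (hper : Function.Periodic f 1)
  (hpos : ∀ x, 0 < f x)

include hℓ hcont hper hpos

/-- a preimage point is determined by its branch data -/
lemma preim_inj {t : ℝ} {z : ℝ × ℝ} {ζ ζ' : ℝ × ℝ}
    (hζ : ζ ∈ preim ℓ f t z) (hζ' : ζ' ∈ preim ℓ f t z)
    (hn : nstep ℓ f ζ.1 (ζ.2 + t) = nstep ℓ f ζ'.1 (ζ'.2 + t))
    (hfl : ⌊(ℓ:ℝ) ^ (nstep ℓ f ζ.1 (ζ.2 + t)) * ζ.1⌋ =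
      ⌊(ℓ:ℝ) ^ (nstep ℓ f ζ'.1 (ζ'.2 + t)) * ζ'.1⌋) : ζ = ζ' := by
  have hEne : ((ℓ:ℝ) ^ (nstep ℓ f ζ.1 (ζ.2 + t))) ≠ 0 := by
    have : (0:ℝ) < (ℓ:ℝ) := by
      have : (2:ℝ) ≤ (ℓ:ℝ) := by exact_mod_cast hℓ
      linarith
    positivity
  obtain ⟨hζX, hζf⟩ := hζ
  obtain ⟨hζ'X, hζ'f⟩ := hζ'
  have h1 : (flow ℓ f t ζ).1 = (flow ℓ f t ζ').1 := by rw [hζf, hζ'f]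
  have h2 : (flow ℓ f t ζ).2 = (flow ℓ f t ζ').2 := by rw [hζf, hζ'f]
  simp only [flow] at h1 h2
  rw [← hn] at h1 h2 hfl
  set n := nstep ℓ f ζ.1 (ζ.2 + t) with hndef
  have hx : ζ.1 = ζ'.1 := by
    have e1 := Int.fract_add_floor ((ℓ:ℝ) ^ n * ζ.1)
    have e2 := Int.fract_add_floor ((ℓ:ℝ) ^ n * ζ'.1)
    have e3 : (ℓ:ℝ) ^ n * ζ.1 = (ℓ:ℝ) ^ n * ζ'.1 := by
      rw [← e1, ← e2, h1, hfl]
    exact mul_left_cancel₀ hEne e3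
  have hy : ζ.2 = ζ'.2 := by
    rw [hx] at h2
    linarith
  exact Prod.ext hx hy

/-- uniform bound on branch number over preimages -/
lemma preim_nstep_le {t : ℝ} (ht : 0 ≤ t) :
    ∃ N : ℕ, ∀ z : ℝ × ℝ, ∀ ζ ∈ preim ℓ f t z, nstep ℓ f ζ.1 (ζ.2 + t) ≤ N := by
  obtain ⟨m, hm0, hm⟩ := exists_min hcont hper hpos
  obtain ⟨F, hF⟩ := exists_max hcont hper
  refine ⟨⌈(t + F) / m⌉₊, fun z ζ hζ => ?_⟩
  have hT : 0 ≤ ζ.2 + t := add_nonneg hζ.1.2.1 ht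
  obtain ⟨h1, -⟩ := nstep_spec hpos m hm0 hm hT (x := ζ.1)
  set n := nstep ℓ f ζ.1 (ζ.2 + t)
  have h2 : (n:ℝ) * m ≤ ζ.2 + t := le_trans (birk_ge m hm n ζ.1) h1
  have h3 : ζ.2 + t ≤ t + F := by
    have := hζ.1.2.2
    have := hF ζ.1
    linarith
  have h4 : (n:ℝ) ≤ (t + F) / m := (le_div_iff₀ hm0).2 (le_trans h2 h3)
  have h5 : (n:ℝ) ≤ (⌈(t + F) / m⌉₊ : ℝ) := h4.trans (Nat.le_ceil _)
  exact_mod_cast h5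

/-- the preimage set is finite -/
lemma preim_finite {t : ℝ} (ht : 0 ≤ t) (z : ℝ × ℝ) : (preim ℓ f t z).Finite := by
  obtain ⟨N, hN⟩ := preim_nstep_le hℓ hcont hper hpos ht
  set g : ℝ × ℝ → ℕ × ℤ := fun ζ =>
    (nstep ℓ f ζ.1 (ζ.2 + t), ⌊(ℓ:ℝ) ^ (nstep ℓ f ζ.1 (ζ.2 + t)) * ζ.1⌋) with hg
  have himg : g '' preim ℓ f t z ⊆ (Set.Iic N) ×ˢ (Set.Icc (-(ℓ:ℤ) ^ N) ((ℓ:ℤ) ^ N)) := by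
    rintro p ⟨ζ, hζ, rfl⟩
    have h1 := hN z ζ hζ
    simp only [hg, Set.mem_prod, Set.mem_Iic, Set.mem_Icc]
    constructor
    · exact h1
    · have hx0 : (0:ℝ) ≤ ζ.1 := hζ.1.1.1
      have hx1 : ζ.1 < 1 := hζ.1.1.2
      have hE0 : (0:ℝ) < (ℓ:ℝ) ^ (nstep ℓ f ζ.1 (ζ.2 + t)) := by
        have : (0:ℝ) < (ℓ:ℝ) := by
          have : (2:ℝ) ≤ (ℓ:ℝ) := by exact_mod_cast hℓ
          linarith
        positivity
      have hle : (ℓ:ℝ) ^ (nstep ℓ f ζ.1 (ζ.2 + t)) * ζ.1 < (ℓ:ℝ) ^ N := by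
        have hmono : (ℓ:ℝ) ^ (nstep ℓ f ζ.1 (ζ.2 + t)) ≤ (ℓ:ℝ) ^ N :=
          pow_le_pow_right₀ (by
            have : (2:ℝ) ≤ (ℓ:ℝ) := by exact_mod_cast hℓ
            linarith) h1
        calc (ℓ:ℝ) ^ (nstep ℓ f ζ.1 (ζ.2 + t)) * ζ.1
            < (ℓ:ℝ) ^ (nstep ℓ f ζ.1 (ζ.2 + t)) * 1 := by
              exact mul_lt_mul_of_pos_left hx1 hE0
          _ ≤ (ℓ:ℝ) ^ N := by rw [mul_one]; exact hmono
      constructor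
      · have hpos0 : (0:ℝ) ≤ (ℓ:ℝ) ^ (nstep ℓ f ζ.1 (ζ.2 + t)) * ζ.1 := by positivity
        have h0 : (0:ℤ) ≤ ⌊(ℓ:ℝ) ^ (nstep ℓ f ζ.1 (ζ.2 + t)) * ζ.1⌋ := Int.floor_nonneg.2 hpos0
        have hneg : -(ℓ:ℤ) ^ N ≤ 0 := neg_nonpos.2 (by positivity)
        omega
      · have : ⌊(ℓ:ℝ) ^ (nstep ℓ f ζ.1 (ζ.2 + t)) * ζ.1⌋ < (ℓ:ℤ) ^ N := by
          rw [Int.floor_lt]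
          push_cast
          exact hle
        omega
  have hfin : ((Set.Iic N) ×ˢ (Set.Icc (-(ℓ:ℤ) ^ N) ((ℓ:ℤ) ^ N))).Finite :=
    (Set.finite_Iic N).prod (Set.finite_Icc _ _)
  refine Set.Finite.of_finite_image (hfin.subset himg) ?_
  intro ζ hζ ζ' hζ' hgz
  simp only [hg, Prod.mk.injEq] at hgz
  exact preim_inj hℓ hcont hper hpos hζ hζ' hgz.1 hgz.2

/-- uniform bound on preimage sums -/
lemma preim_sum_bound {t : ℝ} (ht : 0 ≤ t) :
    ∃ C : ℝ, 0 ≤ C ∧ ∀ z : ℝ × ℝ, ∀ A : Finset (ℝ × ℝ), (∀ ζ ∈ A, ζ ∈ preim ℓ f t z) →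
      ∑ ζ ∈ A, 1 / Ex ℓ f ζ t ≤ C := by
  obtain ⟨N, hN⟩ := preim_nstep_le hℓ hcont hper hpos ht
  refine ⟨N + 1, by positivity, fun z A hA => ?_⟩
  have hℓ0 : (0:ℝ) < (ℓ:ℝ) := by
    have : (2:ℝ) ≤ (ℓ:ℝ) := by exact_mod_cast hℓ
    linarith
  have hmap : ∀ ζ ∈ A, nstep ℓ f ζ.1 (ζ.2 + t) ∈ Finset.range (N + 1) := fun ζ hζ =>
    Finset.mem_range.2 (Nat.lt_succ_of_le (hN z ζ (hA ζ hζ)))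
  rw [← Finset.sum_fiberwise_of_maps_to hmap]
  have hinner : ∀ n ∈ Finset.range (N + 1),
      ∑ ζ ∈ A.filter (fun ζ => nstep ℓ f ζ.1 (ζ.2 + t) = n), 1 / Ex ℓ f ζ t ≤ 1 := by
    intro n _
    have hcard : (A.filter (fun ζ => nstep ℓ f ζ.1 (ζ.2 + t) = n)).card ≤ ℓ ^ n := by
      rw [← Finset.card_range (ℓ ^ n)]
      refine Finset.card_le_card_of_injOn
        (fun ζ => Int.toNat ⌊(ℓ:ℝ) ^ n * ζ.1⌋) ?_ ?_
      · intro ζ hζ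
        simp only [Finset.mem_coe, Finset.mem_filter] at hζ ⊢
        obtain ⟨hζA, hζn⟩ := hζ
        have hmem := hA ζ hζA
        have hx0 : (0:ℝ) ≤ ζ.1 := hmem.1.1.1
        have hx1 : ζ.1 < 1 := hmem.1.1.2
        have h0 : (0:ℝ) ≤ (ℓ:ℝ) ^ n * ζ.1 := by positivity
        have hlt : (ℓ:ℝ) ^ n * ζ.1 < (ℓ:ℝ) ^ n := by
          nlinarith [pow_pos hℓ0 n]
        have : ⌊(ℓ:ℝ) ^ n * ζ.1⌋ < (ℓ:ℤ) ^ n := by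
          rw [Int.floor_lt]; push_cast; exact hlt
        rw [Finset.mem_range]
        have h00 : (0:ℤ) ≤ ⌊(ℓ:ℝ) ^ n * ζ.1⌋ := Int.floor_nonneg.2 h0
        show ⌊(ℓ:ℝ) ^ n * ζ.1⌋.toNat < ℓ ^ n
        have hcast : ((ℓ ^ n : ℕ) : ℤ) = (ℓ:ℤ) ^ n := by push_cast; ring
        omega
      · intro ζ hζ ζ' hζ' heq
        simp only [Finset.coe_filter, Set.mem_setOf_eq] at hζ hζ'
        obtain ⟨hζA, hζn⟩ := hζ
        obtain ⟨hζ'A, hζ'n⟩ := hζ'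
        have hmem := hA ζ hζA
        have hmem' := hA ζ' hζ'A
        have hfl : ⌊(ℓ:ℝ) ^ n * ζ.1⌋ = ⌊(ℓ:ℝ) ^ n * ζ'.1⌋ := by
          have h0 : (0:ℤ) ≤ ⌊(ℓ:ℝ) ^ n * ζ.1⌋ :=
            Int.floor_nonneg.2 (by
              have hx0 : (0:ℝ) ≤ ζ.1 := hmem.1.1.1
              positivity)
          have h0' : (0:ℤ) ≤ ⌊(ℓ:ℝ) ^ n * ζ'.1⌋ :=
            Int.floor_nonneg.2 (by
              have hx0 : (0:ℝ) ≤ ζ'.1 := hmem'.1.1.1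
              positivity)
          have heq' : ⌊(ℓ:ℝ) ^ n * ζ.1⌋.toNat = ⌊(ℓ:ℝ) ^ n * ζ'.1⌋.toNat := heq
          omega
        refine preim_inj hℓ hcont hper hpos hmem hmem' (by rw [hζn, hζ'n]) ?_
        rw [hζn, hζ'n]
        exact hfl
    have hterm : ∀ ζ ∈ A.filter (fun ζ => nstep ℓ f ζ.1 (ζ.2 + t) = n),
        1 / Ex ℓ f ζ t = 1 / (ℓ:ℝ) ^ n := by
      intro ζ hζ
      simp only [Finset.mem_filter] at hζ
      rw [Ex, hζ.2]
    rw [Finset.sum_congr rfl hterm, Finset.sum_const, nsmul_eq_mul]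
    have hEpos : (0:ℝ) < (ℓ:ℝ) ^ n := pow_pos hℓ0 n
    have hcard' : ((A.filter (fun ζ => nstep ℓ f ζ.1 (ζ.2 + t) = n)).card : ℝ)
        ≤ (ℓ:ℝ) ^ n := by
      have : ((ℓ ^ n : ℕ) : ℝ) = (ℓ:ℝ) ^ n := by push_cast; ring
      rw [← this]
      exact_mod_cast hcard
    rw [div_eq_mul_inv, one_mul]
    calc ((A.filter (fun ζ => nstep ℓ f ζ.1 (ζ.2 + t) = n)).card : ℝ) * ((ℓ:ℝ) ^ n)⁻¹
        ≤ (ℓ:ℝ) ^ n * ((ℓ:ℝ) ^ n)⁻¹ :=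
          mul_le_mul_of_nonneg_right hcard' (by positivity)
      _ = 1 := mul_inv_cancel₀ (ne_of_gt hEpos)
  calc ∑ n ∈ Finset.range (N + 1),
        ∑ ζ ∈ A.filter (fun ζ => nstep ℓ f ζ.1 (ζ.2 + t) = n), 1 / Ex ℓ f ζ t
      ≤ ∑ n ∈ Finset.range (N + 1), (1:ℝ) := Finset.sum_le_sum hinner
    _ = (N:ℝ) + 1 := by
        rw [Finset.sum_const, Finset.card_range, nsmul_eq_mul, mul_one]
        push_cast
        ring

end Count

lemma tsum_set_eq {α : Type*} {A : Set α} (hA : A.Finite) (g : α → ℝ) :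
    ∑' x : A, g x = ∑ x ∈ hA.toFinset, g x := by
  rw [_root_.tsum_subtype]
  rw [tsum_eq_sum (s := hA.toFinset)
    (fun b hb => Set.indicator_of_notMem (by simpa using hb) g)]
  exact Finset.sum_congr rfl fun b hb => Set.indicator_of_mem (by simpa using hb) g

end Aux

section Main

variable {ℓ r : ℕ} {γ₀ : ℝ} {f : ℝ → ℝ}

/-- the admissible preimage set appearing in `nQat` -/
def Zset (ℓ : ℕ) (γ₀ : ℝ) (f : ℝ → ℝ) (t : ℝ) (z v : ℝ × ℝ) : Set (ℝ × ℝ) :=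
  {ζ : ℝ × ℝ | ζ ∈ preim ℓ f t z ∧
    ∀ c : ℝ, c • v ∈ DTapp ℓ f t ζ '' hatCone ℓ γ₀ f}

variable (hℓ : 2 ≤ ℓ) (hcont : Continuous f) (hper : Function.Periodic f 1)
  (hpos : ∀ x, 0 < f x)

include hℓ hcont hper hpos

lemma Zset_finite {t : ℝ} (ht : 0 ≤ t) (z v : ℝ × ℝ) :
    (Zset ℓ γ₀ f t z v).Finite :=
  (preim_finite hℓ hcont hper hpos ht z).subset (fun ζ h => h.1)

lemma nQat_eq_sum {t : ℝ} (ht : 0 ≤ t) (z v : ℝ × ℝ) :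
    nQat ℓ γ₀ f t z v =
      ∑ ζ ∈ (Zset_finite hℓ hcont hper hpos ht z v (γ₀ := γ₀)).toFinset,
        1 / Ex ℓ f ζ t := by
  have h0 : nQat ℓ γ₀ f t z v = ∑' ζ : (Zset ℓ γ₀ f t z v), 1 / Ex ℓ f ζ.1 t := rfl
  rw [h0]
  exact tsum_set_eq (Zset_finite hℓ hcont hper hpos ht z v (γ₀ := γ₀))
    (fun ζ => 1 / Ex ℓ f ζ t)

omit hcont hper hpos in
lemma nQat_nonneg (t : ℝ) (z v : ℝ × ℝ) : 0 ≤ nQat ℓ γ₀ f t z v := by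
  refine tsum_nonneg fun ζ => ?_
  have := Ex_pos (f := f) hℓ t ζ.1
  positivity

lemma nQ_bddAbove {t : ℝ} (ht : 0 ≤ t) :
    BddAbove {x : ℝ | ∃ z ∈ Xf f, ∃ v : ℝ × ℝ, v ≠ 0 ∧ x = nQat ℓ γ₀ f t z v} := by
  obtain ⟨C, hC0, hC⟩ := preim_sum_bound hℓ hcont hper hpos ht
  refine ⟨C, ?_⟩
  rintro x ⟨z, hz, v, hv, rfl⟩
  rw [nQat_eq_sum hℓ hcont hper hpos ht]
  exact hC z _ (fun ζ hζ => ((Set.Finite.mem_toFinset _).1 hζ).1)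

lemma nQat_le_nQ {t : ℝ} (ht : 0 ≤ t) {z v : ℝ × ℝ} (hz : z ∈ Xf f) (hv : v ≠ 0) :
    nQat ℓ γ₀ f t z v ≤ nQ ℓ γ₀ f t :=
  le_csSup (nQ_bddAbove hℓ hcont hper hpos ht) ⟨z, hz, v, hv, rfl⟩

lemma nQ_nonneg {t : ℝ} (ht : 0 ≤ t) : 0 ≤ nQ ℓ γ₀ f t := by
  have hz : ((0:ℝ), (0:ℝ)) ∈ Xf f :=
    ⟨⟨le_refl 0, zero_lt_one⟩, ⟨le_refl 0, hpos 0⟩⟩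
  have hv : ((1:ℝ), (0:ℝ)) ≠ (0 : ℝ × ℝ) := by
    simp [Prod.ext_iff]
  exact le_trans (nQat_nonneg hℓ _ _ _)
    (nQat_le_nQ hℓ hcont hper hpos ht hz hv)

end Main

section MainProof

variable {ℓ r : ℕ} {γ₀ : ℝ} {f : ℝ → ℝ}

lemma nQat_add_le (hℓ : 2 ≤ ℓ) (hr : 3 ≤ r) (hf : ContDiff ℝ r f)
    (hper : Function.Periodic f 1) (hpos : ∀ x, 0 < f x)
    (hγ₁ : (ℓ : ℝ)⁻¹ < γ₀) (hγ₂ : γ₀ < 1)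
    {t s : ℝ} (ht : 0 ≤ t) (hs : 0 ≤ s) {z v : ℝ × ℝ} (hz : z ∈ Xf f) (hv : v ≠ 0) :
    nQat ℓ γ₀ f (t + s) z v ≤ nQ ℓ γ₀ f t * nQ ℓ γ₀ f s := by
  have hcont : Continuous f := hf.continuous
  have hdiff : Differentiable ℝ f :=
    hf.differentiable (by exact_mod_cast (show r ≠ 0 by omega))
  have hts : 0 ≤ t + s := add_nonneg ht hs
  set ZF := (Zset_finite hℓ hcont hper hpos hts z v (γ₀ := γ₀)).toFinset with hZF
  rw [nQat_eq_sum hℓ hcont hper hpos hts]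
  have hmaps : ∀ ζ ∈ ZF, flow ℓ f t ζ ∈ ZF.image (flow ℓ f t) := fun ζ hζ =>
    Finset.mem_image_of_mem _ hζ
  rw [← Finset.sum_fiberwise_of_maps_to hmaps]
  have hmem : ∀ ζ ∈ ZF, ζ ∈ preim ℓ f (t + s) z ∧
      ∀ c : ℝ, c • v ∈ DTapp ℓ f (t + s) ζ '' hatCone ℓ γ₀ f := by
    intro ζ hζ
    rw [hZF, Set.Finite.mem_toFinset] at hζ
    exact hζ
  -- every fiber base point is admissible at time s
  have himg : ∀ w ∈ ZF.image (flow ℓ f t), w ∈ Zset ℓ γ₀ f s z v := by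
    intro w hw
    obtain ⟨ζ₀, hζ₀, hζ₀w⟩ := Finset.mem_image.1 hw
    obtain ⟨hζ₀p, hζ₀L⟩ := hmem ζ₀ hζ₀
    have hζ₀X : ζ₀ ∈ Xf f := hζ₀p.1
    have hwX : w ∈ Xf f := hζ₀w ▸ flow_mem_Xf hℓ hcont hper hpos hζ₀X ht
    have hwp : w ∈ preim ℓ f s z := by
      refine ⟨hwX, ?_⟩
      rw [← hζ₀w, flow_comp hℓ hcont hper hpos hζ₀X.2.1 ht hs]
      exact hζ₀p.2
    refine ⟨hwp, fun c => ?_⟩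
    obtain ⟨u, hu, hDu⟩ := hζ₀L c
    refine ⟨DTapp ℓ f t ζ₀ u, DTapp_cone hℓ hr hf hper hγ₁ hγ₂ hu, ?_⟩
    rw [← hζ₀w, ← DTapp_comp hℓ hcont hper hpos hdiff hζ₀X.2.1 ht hs]
    exact hDu
  -- bound for each fiber sum
  have key : ∀ w ∈ ZF.image (flow ℓ f t),
      (∑ ζ ∈ ZF.filter (fun ζ => flow ℓ f t ζ = w), 1 / Ex ℓ f ζ (t + s))
        ≤ nQ ℓ γ₀ f t * (1 / Ex ℓ f w s) := by
    intro w hw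
    obtain ⟨ζ₀, hζ₀, hζ₀w⟩ := Finset.mem_image.1 hw
    obtain ⟨hζ₀p, hζ₀L⟩ := hmem ζ₀ hζ₀
    have hζ₀X : ζ₀ ∈ Xf f := hζ₀p.1
    have hwX : w ∈ Xf f := hζ₀w ▸ flow_mem_Xf hℓ hcont hper hpos hζ₀X ht
    set vw := DTinv ℓ f s w v with hvw
    have hvwv : DTapp ℓ f s w vw = v := DTapp_DTinv hℓ s w v
    have hvwne : vw ≠ 0 := DTinv_ne_zero hℓ s w hv
    have hfib : ∀ ζ ∈ ZF.filter (fun ζ => flow ℓ f t ζ = w),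
        ζ ∈ Zset ℓ γ₀ f t w vw := by
      intro ζ hζ
      rw [Finset.mem_filter] at hζ
      obtain ⟨hζZF, hζw⟩ := hζ
      obtain ⟨hζp, hζL⟩ := hmem ζ hζZF
      refine ⟨⟨hζp.1, hζw⟩, fun c => ?_⟩
      obtain ⟨u, hu, hDu⟩ := hζL c
      refine ⟨u, hu, ?_⟩
      have hζw' : flow ℓ f t ζ = w := hζw
      have e0 := DTapp_comp hℓ hcont hper hpos hdiff hζp.1.2.1 ht hs u
      rw [hζw'] at e0
      have e1 : DTapp ℓ f s w (DTapp ℓ f t ζ u) = c • v := by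
        rw [← e0]
        exact hDu
      have e2 : DTapp ℓ f s w (c • vw) = c • v := by
        rw [DTapp_smul, hvwv]
      have e3 : DTapp ℓ f s w (DTapp ℓ f t ζ u) = DTapp ℓ f s w (c • vw) := by
        rw [e1, e2]
      exact DTapp_inj hℓ s w e3
    have hsplit : ∀ ζ ∈ ZF.filter (fun ζ => flow ℓ f t ζ = w),
        1 / Ex ℓ f ζ (t + s) = (1 / Ex ℓ f ζ t) * (1 / Ex ℓ f w s) := by
      intro ζ hζ
      rw [Finset.mem_filter] at hζ
      obtain ⟨hζZF, hζw⟩ := hζ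
      obtain ⟨hζp, -⟩ := hmem ζ hζZF
      rw [← hζw, Ex_comp hℓ hcont hper hpos hζp.1.2.1 ht hs, ← one_div_mul_one_div]
    rw [Finset.sum_congr rfl hsplit, ← Finset.sum_mul]
    have hinner : ∑ ζ ∈ ZF.filter (fun ζ => flow ℓ f t ζ = w), 1 / Ex ℓ f ζ t
        ≤ nQ ℓ γ₀ f t := by
      have h1 : ∑ ζ ∈ ZF.filter (fun ζ => flow ℓ f t ζ = w), 1 / Ex ℓ f ζ t
          ≤ ∑ ζ ∈ (Zset_finite hℓ hcont hper hpos ht w vw (γ₀ := γ₀)).toFinset,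
            1 / Ex ℓ f ζ t := by
        refine Finset.sum_le_sum_of_subset_of_nonneg ?_ ?_
        · intro ζ hζ
          rw [Set.Finite.mem_toFinset]
          exact hfib ζ hζ
        · intro ζ _ _
          have := Ex_pos (f := f) hℓ t ζ
          positivity
      rw [← nQat_eq_sum hℓ hcont hper hpos ht] at h1
      exact h1.trans (nQat_le_nQ hℓ hcont hper hpos ht hwX hvwne)
    have hEw : 0 ≤ 1 / Ex ℓ f w s := by
      have := Ex_pos (f := f) hℓ s w
      positivity
    exact mul_le_mul_of_nonneg_right hinner hEw
  calc ∑ w ∈ ZF.image (flow ℓ f t), ∑ ζ ∈ ZF.filter (fun ζ => flow ℓ f t ζ = w),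
        1 / Ex ℓ f ζ (t + s)
      ≤ ∑ w ∈ ZF.image (flow ℓ f t), nQ ℓ γ₀ f t * (1 / Ex ℓ f w s) :=
        Finset.sum_le_sum key
    _ = nQ ℓ γ₀ f t * ∑ w ∈ ZF.image (flow ℓ f t), 1 / Ex ℓ f w s := by
        rw [Finset.mul_sum]
    _ ≤ nQ ℓ γ₀ f t * nQ ℓ γ₀ f s := by
        refine mul_le_mul_of_nonneg_left ?_ (nQ_nonneg hℓ hcont hper hpos ht)
        have houter : ∑ w ∈ ZF.image (flow ℓ f t), 1 / Ex ℓ f w s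
            ≤ nQat ℓ γ₀ f s z v := by
          rw [nQat_eq_sum hℓ hcont hper hpos hs]
          refine Finset.sum_le_sum_of_subset_of_nonneg ?_ ?_
          · intro w hw
            rw [Set.Finite.mem_toFinset]
            exact himg w hw
          · intro w _ _
            have := Ex_pos (f := f) hℓ s w
            positivity
        exact houter.trans (nQat_le_nQ hℓ hcont hper hpos hs hz hv)

end MainProof

/-- For every `f ∈ C^r_+(S¹)` the quantity `𝐧(f,t)` is
sub-multiplicative in `t`: `𝐧(f,t+s) ≤ 𝐧(f,t)·𝐧(f,s)`. -/
theorem statement18 (ℓ r : ℕ) (hℓ : 2 ≤ ℓ) (hr : 3 ≤ r) (γ₀ : ℝ)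
    (hγ₁ : (ℓ : ℝ)⁻¹ < γ₀) (hγ₂ : γ₀ < 1) (f : ℝ → ℝ) (hf : CrPlus r f)
    (t s : ℝ) (ht : 0 ≤ t) (hs : 0 ≤ s) :
    nQ ℓ γ₀ f (t + s) ≤ nQ ℓ γ₀ f t * nQ ℓ γ₀ f s := by
  obtain ⟨hcd, hper, hpos⟩ := hf
  have hcont : Continuous f := hcd.continuous
  refine Real.sSup_le ?_
    (mul_nonneg (nQ_nonneg hℓ hcont hper hpos ht) (nQ_nonneg hℓ hcont hper hpos hs))
  rintro x ⟨z, hz, v, hv, rfl⟩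
  exact nQat_add_le hℓ hr hcd hper hpos hγ₁ hγ₂ ht hs hz hv

end AngleMult
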